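/- Let ρ be a density matrix on H_A ⊗ H_B ⊗ H_E, let {Π^a_x}_a, {Λ^b_y}_b be POVMs on H_A, H_B respectively, and let {Γ^{(a,b)}_{(x,y)}}_{a,b} be a POVM on H_E. If for a fixed pair (x,y) one has Σ_{a,b} Tr[(Π^a_x ⊗ Λ^b_y ⊗ Γ^{(a,b)}_{(x,y)}) ρ] = 1, then the post-measurement state of the reduced state ρ^{AB} = Tr_E ρ under the measurement (x,y) is unchanged: Σ_{a,b} (√(Π^a_x) ⊗ √(Λ^b_y)) ρ^{AB} (√(Π^a_x) ⊗ √(Λ^b_y)) = ρ^{AB}. -/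

import Mathlib

/-!
Write `M_q = Π^a_x ⊗ Λ^b_y` for `q = (a, b)`. The numbers `Tr[(M_q ⊗ Γ_r) ρ]` are nonnegative and
sum over all pairs `(q, r)` to `Tr ρ = 1`, so perfect guessing forces the mismatched ones
(`q ≠ r`) to vanish, and for positive semidefinite operators this means `(M_q ⊗ Γ_r) ρ = 0`.
Hence `(M_q ⊗ 1) ρ = (M_q ⊗ Γ_q) ρ = (1 ⊗ Γ_q) ρ`, and since `Γ_q` can be moved across `ρ` under
the partial trace over `E`, `M_q` commutes with `ρ^{AB}`; so does its square root
`√Π^a_x ⊗ √Λ^b_y`, and `∑_q √M_q ρ^{AB} √M_q = ρ^{AB} ∑_q M_q = ρ^{AB}`.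
-/

open Matrix ComplexOrder Kronecker

/-- Partial trace over the third (Eve) tensor factor. -/
noncomputable def ptE {dA dB dE : ℕ}
    (ρ : Matrix ((Fin dA × Fin dB) × Fin dE) ((Fin dA × Fin dB) × Fin dE) ℂ) :
    Matrix (Fin dA × Fin dB) (Fin dA × Fin dB) ℂ :=
  fun i j => ∑ k : Fin dE, ρ (i, k) (j, k)

namespace Matrix.PosSemidef

/-- The positive semidefinite square root of a positive semidefinite matrix
(the definition from the older Mathlib, removed since). -/
noncomputable def sqrt {n 𝕜 : Type*} [Fintype n] [RCLike 𝕜] [DecidableEq n]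
    {A : Matrix n n 𝕜} (hA : A.PosSemidef) : Matrix n n 𝕜 :=
  (hA.1.eigenvectorUnitary : Matrix n n 𝕜) *
    diagonal (fun i => ((Real.sqrt (hA.1.eigenvalues i) : ℝ) : 𝕜)) *
    (star hA.1.eigenvectorUnitary : Matrix n n 𝕜)

end Matrix.PosSemidef

open scoped MatrixOrder

theorem Fintype.eq_zero_of_sum_sum_eq_sum_diag {ι α : Type*} [Fintype ι] [DecidableEq ι]
    [AddCommGroup α] [PartialOrder α] [IsOrderedAddMonoid α] {f : ι → ι → α}
    (hf : ∀ i j, 0 ≤ f i j) (h : ∑ i, ∑ j, f i j = ∑ i, f i i) {i j : ι} (hij : i ≠ j) :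
    f i j = 0 := by
  have hoff : ∑ i, ∑ j ∈ Finset.univ.erase i, f i j = 0 := by
    simp_rw [Finset.sum_erase_eq_sub (Finset.mem_univ _), Finset.sum_sub_distrib, h, sub_self]
  have hrow := (Finset.sum_eq_zero_iff_of_nonneg fun i _ => Finset.sum_nonneg fun j _ => hf i j).mp
    hoff i (Finset.mem_univ i)
  exact (Finset.sum_eq_zero_iff_of_nonneg fun j _ => hf i j).mp hrow j
    (Finset.mem_erase.mpr ⟨hij.symm, Finset.mem_univ j⟩)

namespace Matrix

section Kronecker

variable {ι l m n p R : Type*} [CommSemiring R]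

theorem sum_kronecker (s : Finset ι) (A : ι → Matrix l m R) (B : Matrix n p R) :
    (∑ i ∈ s, A i) ⊗ₖ B = ∑ i ∈ s, A i ⊗ₖ B :=
  (kroneckerBilinear (R := R) (α := R)).map_sum₂ s A B

theorem kronecker_sum (s : Finset ι) (A : Matrix l m R) (B : ι → Matrix n p R) :
    A ⊗ₖ (∑ i ∈ s, B i) = ∑ i ∈ s, A ⊗ₖ B i :=
  map_sum (kroneckerBilinear (R := R) (α := R) A) B s

end Kronecker

theorem kronecker_one_mul_eq_one_kronecker_mul {ι m p R : Type*} [Fintype ι] [Fintype m]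
    [DecidableEq m] [Fintype p] [DecidableEq p] [CommSemiring R] {M : ι → Matrix m m R}
    {Γ : ι → Matrix p p R} {ρ : Matrix (m × p) (m × p) R}
    (hoff : ∀ q r, q ≠ r → (M q ⊗ₖ Γ r) * ρ = 0) (hMsum : ∑ q, M q = 1)
    (hΓsum : ∑ q, Γ q = 1) (q : ι) :
    (M q ⊗ₖ (1 : Matrix p p R)) * ρ = ((1 : Matrix m m R) ⊗ₖ Γ q) * ρ := by
  rw [← hΓsum, ← hMsum, kronecker_sum, sum_kronecker, Finset.sum_mul, Finset.sum_mul,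
    Fintype.sum_eq_single q fun r hr => hoff q r hr.symm,
    Fintype.sum_eq_single q fun r hr => hoff r q hr]

section TraceRight

variable {m p R : Type*} [Fintype m] [Fintype p] [CommSemiring R]

def traceRight (ρ : Matrix (m × p) (m × p) R) : Matrix m m R :=
  of fun i j => ∑ k, ρ (i, k) (j, k)

theorem traceRight_kronecker_one_mul [DecidableEq p] (A : Matrix m m R)
    (ρ : Matrix (m × p) (m × p) R) :
    traceRight ((A ⊗ₖ (1 : Matrix p p R)) * ρ) = A * traceRight ρ := by
  ext i j
  simp only [traceRight, of_apply, mul_apply, kroneckerMap_apply, one_apply, mul_ite, mul_one,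
    mul_zero, ite_mul, zero_mul, Fintype.sum_prod_type, Finset.sum_ite_eq, Finset.mem_univ,
    if_true, Finset.mul_sum]
  exact Finset.sum_comm

theorem traceRight_mul_kronecker_one [DecidableEq p] (A : Matrix m m R)
    (ρ : Matrix (m × p) (m × p) R) :
    traceRight (ρ * (A ⊗ₖ (1 : Matrix p p R))) = traceRight ρ * A := by
  ext i j
  simp only [traceRight, of_apply, mul_apply, kroneckerMap_apply, one_apply, mul_ite, mul_one,
    mul_zero, Fintype.sum_prod_type, Finset.sum_ite_eq', Finset.mem_univ, if_true, Finset.sum_mul]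
  exact Finset.sum_comm

theorem traceRight_one_kronecker_mul [DecidableEq m] (B : Matrix p p R)
    (ρ : Matrix (m × p) (m × p) R) :
    traceRight (((1 : Matrix m m R) ⊗ₖ B) * ρ) = traceRight (ρ * ((1 : Matrix m m R) ⊗ₖ B)) := by
  ext i j
  simp only [traceRight, of_apply, mul_apply, kroneckerMap_apply, one_apply, ite_mul, one_mul,
    zero_mul, mul_ite, mul_zero, Fintype.sum_prod_type, Finset.sum_ite_irrel,
    Finset.sum_const_zero, Finset.sum_ite_eq, Finset.sum_ite_eq', Finset.mem_univ, if_true]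
  rw [Finset.sum_comm]
  simp [mul_comm]

theorem commute_traceRight_of_kronecker_one_mul_eq [DecidableEq m] [DecidableEq p] [StarRing R]
    {A : Matrix m m R} {B : Matrix p p R} {ρ : Matrix (m × p) (m × p) R}
    (hA : A.IsHermitian) (hB : B.IsHermitian) (hρ : ρ.IsHermitian)
    (h : (A ⊗ₖ (1 : Matrix p p R)) * ρ = ((1 : Matrix m m R) ⊗ₖ B) * ρ) :
    Commute A (traceRight ρ) := by
  have h' : ρ * (A ⊗ₖ (1 : Matrix p p R)) = ρ * ((1 : Matrix m m R) ⊗ₖ B) := by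
    simpa only [conjTranspose_mul, conjTranspose_kronecker, conjTranspose_one, hA.eq, hB.eq,
      hρ.eq] using congrArg conjTranspose h
  calc A * traceRight ρ = traceRight ((A ⊗ₖ (1 : Matrix p p R)) * ρ) :=
        (traceRight_kronecker_one_mul A ρ).symm
    _ = traceRight (ρ * ((1 : Matrix m m R) ⊗ₖ B)) := by
        rw [h, traceRight_one_kronecker_mul]
    _ = traceRight ρ * A := by rw [← h', traceRight_mul_kronecker_one]

end TraceRight

namespace PosSemidef

variable {n 𝕜 : Type*} [Fintype n] [RCLike 𝕜] [DecidableEq n] {A B : Matrix n n 𝕜}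

theorem sqrt_eq_cfc (hA : A.PosSemidef) : hA.sqrt = cfc Real.sqrt A := by
  rw [hA.1.cfc_eq, IsHermitian.cfc, Unitary.conjStarAlgAut_apply]
  rfl

theorem posSemidef_sqrt (hA : A.PosSemidef) : hA.sqrt.PosSemidef := by
  rw [sqrt_eq_cfc, ← nonneg_iff_posSemidef]
  exact cfc_nonneg fun x _ => Real.sqrt_nonneg x

theorem sqrt_mul_self (hA : A.PosSemidef) : hA.sqrt * hA.sqrt = A := by
  rw [sqrt_eq_cfc, ← cfc_mul Real.sqrt Real.sqrt A]
  conv_rhs => rw [← cfc_id' ℝ A]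
  exact cfc_congr fun x hx => Real.mul_self_sqrt (spectrum_nonneg_of_nonneg hA.nonneg hx)

theorem commute_of_commute_mul_self (hA : A.PosSemidef) (h : Commute (A * A) B) :
    Commute A B := by
  rw [← CFC.sqrt_mul_self A hA.nonneg]
  exact h.cfcₙ_nnreal _

theorem trace_mul_eq_trace_conjTranspose_mul_self (hA : A.PosSemidef) (hB : B.PosSemidef) :
    (A * B).trace = ((hA.sqrt * hB.sqrt)ᴴ * (hA.sqrt * hB.sqrt)).trace := by
  conv_lhs => rw [← hA.sqrt_mul_self, ← hB.sqrt_mul_self]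
  rw [conjTranspose_mul, hA.posSemidef_sqrt.1.eq, hB.posSemidef_sqrt.1.eq,
    Matrix.mul_assoc hB.sqrt, trace_mul_comm hB.sqrt]
  simp only [Matrix.mul_assoc]

theorem trace_mul_nonneg (hA : A.PosSemidef) (hB : B.PosSemidef) : 0 ≤ (A * B).trace := by
  rw [trace_mul_eq_trace_conjTranspose_mul_self hA hB]
  exact (posSemidef_conjTranspose_mul_self _).trace_nonneg

theorem mul_eq_zero_of_trace_mul_eq_zero (hA : A.PosSemidef) (hB : B.PosSemidef)
    (h : (A * B).trace = 0) : A * B = 0 := by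
  rw [trace_mul_eq_trace_conjTranspose_mul_self hA hB,
    trace_conjTranspose_mul_self_eq_zero_iff] at h
  rw [← hA.sqrt_mul_self, ← hB.sqrt_mul_self, Matrix.mul_assoc,
    ← Matrix.mul_assoc hA.sqrt hB.sqrt, h, Matrix.zero_mul, Matrix.mul_zero]

end PosSemidef

theorem kronecker_mul_eq_zero_of_sum_trace_eq_trace {ι m p 𝕜 : Type*} [Fintype ι]
    [DecidableEq ι] [Fintype m] [DecidableEq m] [Fintype p] [DecidableEq p] [RCLike 𝕜]
    {M : ι → Matrix m m 𝕜} {Γ : ι → Matrix p p 𝕜} {ρ : Matrix (m × p) (m × p) 𝕜}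
    (hρ : ρ.PosSemidef) (hM : ∀ q, (M q).PosSemidef) (hMsum : ∑ q, M q = 1)
    (hΓ : ∀ q, (Γ q).PosSemidef) (hΓsum : ∑ q, Γ q = 1)
    (h : ∑ q, ((M q ⊗ₖ Γ q) * ρ).trace = ρ.trace) {q r : ι} (hqr : q ≠ r) :
    (M q ⊗ₖ Γ r) * ρ = 0 := by
  have hnonneg : ∀ q r, 0 ≤ ((M q ⊗ₖ Γ r) * ρ).trace := fun q r =>
    ((hM q).kronecker (hΓ r)).trace_mul_nonneg hρ
  have hsum : ∑ q, ∑ r, ((M q ⊗ₖ Γ r) * ρ).trace = ∑ q, ((M q ⊗ₖ Γ q) * ρ).trace := by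
    simp only [← trace_sum, ← Finset.sum_mul, ← kronecker_sum, ← sum_kronecker, hMsum, hΓsum,
      one_kronecker_one, Matrix.one_mul, h]
  exact ((hM q).kronecker (hΓ r)).mul_eq_zero_of_trace_mul_eq_zero hρ
    (Fintype.eq_zero_of_sum_sum_eq_sum_diag hnonneg hsum hqr)

end Matrix

/-- If Eve's measurement perfectly predicts Alice's and Bob's joint outcomes for the
input pair `(x, y)`, then the corresponding local measurement does not disturb the
reduced state `ρ^{AB}`. -/
theorem perfect_guessing_no_disturbance {dA dB dE oA oB : ℕ}
    (ρ : Matrix ((Fin dA × Fin dB) × Fin dE) ((Fin dA × Fin dB) × Fin dE) ℂ)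
    (hρ : ρ.PosSemidef) (hρtr : ρ.trace = 1)
    (Pi : Fin oA → Matrix (Fin dA) (Fin dA) ℂ)
    (Λ : Fin oB → Matrix (Fin dB) (Fin dB) ℂ)
    (Γ : Fin oA × Fin oB → Matrix (Fin dE) (Fin dE) ℂ)
    (hPi : ∀ a, (Pi a).PosSemidef) (hPisum : ∑ a, Pi a = 1)
    (hΛ : ∀ b, (Λ b).PosSemidef) (hΛsum : ∑ b, Λ b = 1)
    (hΓ : ∀ ab, (Γ ab).PosSemidef) (hΓsum : ∑ ab, Γ ab = 1)
    (hguess : ∑ a, ∑ b, (((Pi a ⊗ₖ Λ b) ⊗ₖ Γ (a, b)) * ρ).trace = 1) :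
    ∑ a, ∑ b, ((hPi a).sqrt ⊗ₖ (hΛ b).sqrt) * ptE ρ * ((hPi a).sqrt ⊗ₖ (hΛ b).sqrt)
      = ptE ρ := by
  set M : Fin oA × Fin oB → Matrix (Fin dA × Fin dB) (Fin dA × Fin dB) ℂ :=
    fun q => Pi q.1 ⊗ₖ Λ q.2
  set K : Fin oA × Fin oB → Matrix (Fin dA × Fin dB) (Fin dA × Fin dB) ℂ :=
    fun q => (hPi q.1).sqrt ⊗ₖ (hΛ q.2).sqrt
  have hM q : (M q).PosSemidef := (hPi q.1).kronecker (hΛ q.2)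
  have hMsum : ∑ q, M q = 1 := by
    simp only [M, Fintype.sum_prod_type, ← kronecker_sum, ← sum_kronecker, hPisum, hΛsum,
      one_kronecker_one]
  have hK q : (K q).PosSemidef := (hPi q.1).posSemidef_sqrt.kronecker (hΛ q.2).posSemidef_sqrt
  have hKK q : K q * K q = M q := by
    simp only [K, M, ← mul_kronecker_mul, PosSemidef.sqrt_mul_self]
  have hoff q r (hqr : q ≠ r) : (M q ⊗ₖ Γ r) * ρ = 0 :=
    kronecker_mul_eq_zero_of_sum_trace_eq_trace hρ hM hMsum hΓ hΓsum
      (by rw [hρtr, ← hguess, Fintype.sum_prod_type]) hqr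
  have hcomm q : Commute (K q) (traceRight ρ) := (hK q).commute_of_commute_mul_self <|
    hKK q ▸ commute_traceRight_of_kronecker_one_mul_eq (hM q).1 (hΓ q).1 hρ.1
      (kronecker_one_mul_eq_one_kronecker_mul hoff hMsum hΓsum q)
  change ∑ a, ∑ b, K (a, b) * traceRight ρ * K (a, b) = traceRight ρ
  calc ∑ a, ∑ b, K (a, b) * traceRight ρ * K (a, b) = ∑ q, traceRight ρ * M q := by
        rw [← Fintype.sum_prod_type']
        refine Fintype.sum_congr _ _ fun q => ?_
        rw [(hcomm q).eq, Matrix.mul_assoc, hKK]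
    _ = traceRight ρ := by rw [← Finset.mul_sum, hMsum, Matrix.mul_one]
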